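/- arXiv:2303.04859 — 2 statements merged into one kernel-verified Lean document; each statement's English description precedes it below -/
import Mathlib

section
/- Let (X,Y) ∼ D where D is a probability distribution on {-1,1}^d × {-1,1}, let J ⊆ {1,…,d}, and let h: {-1,1}^d → ℝ be any function depending only on the coordinates in J. Let f^J(x) = Σ_{S⊆J} a_S·χ_S(x) with a_S = 2^{−d}·E[Y·χ_S(X)]. Then the 0-1 loss of g = sign ∘ h satisfies P{Y ≠ sign(h(X))} ≤ 1/2 − (1/2)·Σ_{x ∈ {-1,1}^d} |f^J(x)| + U( √( 2^d · Σ_{x ∈ {-1,1}^d} (f^J(x) − h(x))² ) ), where U(x) = x³ + (3/2)x² + (3/2)x. -/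
open MeasureTheory ProbabilityTheory

/-- The sign function: `sign t = 1` if `t ≥ 0` and `-1` otherwise. -/
noncomputable def signFun (t : ℝ) : ℝ := if 0 ≤ t then 1 else -1

/-- The polynomial `U(x) = x³ + (3/2)x² + (3/2)x`. -/
noncomputable def Upoly (x : ℝ) : ℝ := x ^ 3 + (3 / 2) * x ^ 2 + (3 / 2) * x

/-- The character (monomial) `χ_S(x) = ∏_{j ∈ S} x_j` associated with `S ⊆ [d]`. -/
noncomputable def chiChar {d : ℕ} (S : Finset (Fin d)) (x : Fin d → ℝ) : ℝ := ∏ j ∈ S, x j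

/-- The point of the Boolean cube `{-1,1}^d` encoded by a Boolean vector. -/
noncomputable def pmOf {d : ℕ} (b : Fin d → Bool) : Fin d → ℝ :=
  fun i => if b i then 1 else -1

/-- The stochastic Fourier coefficient `a_S = 2^{-d}·E[Y·χ_S(X)]` of the label under `D`. -/
noncomputable def coeffA {d : ℕ} (D : Measure ((Fin d → ℝ) × ℝ)) (S : Finset (Fin d)) : ℝ :=
  (1 / 2 ^ d : ℝ) * ∫ p, p.2 * chiChar S p.1 ∂D

/-- The function `f^J(x) = Σ_{S ⊆ J} a_S·χ_S(x)`. -/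
noncomputable def fJ {d : ℕ} (D : Measure ((Fin d → ℝ) × ℝ)) (J : Finset (Fin d))
    (x : Fin d → ℝ) : ℝ :=
  ∑ S ∈ J.powerset, coeffA D S * chiChar S x

/-! Since `Y` and `sign (h X)` take the values `±1`, the loss equals
`1/2 - 1/2 · E[Y · sign (h X)]`. The kernel
`K_J(x, v) = ∑_{S ⊆ J} χ_S(x) χ_S(v) = ∏_{j ∈ J} (1 + x_j v_j)` vanishes on the cube unless `x`
and `v` agree on `J`, and sums to `2^d` over `v`, so averaging it against a function depending
only on `J` reproduces that function. As `f^J(v) = 2^{-d} E[Y · K_J(X, v)]`, this gives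
`E[Y · sign (h X)] = ∑_x sign (h x) · f^J(x)`. The bound then follows from
`|f| - sign(h) · f ≤ 2 |f - h|` pointwise, Cauchy–Schwarz, and `t ≤ U(t)` for `t ≥ 0`. -/

open Finset

/- `h` is arbitrary, so neither the event `{Y ≠ sign (h X)}` nor `Y · sign (h X)` need be
measurable; it is the finite support of `D` that makes the loss an integral. -/
lemma integrable_of_ae_mem_finite {α : Type*} [MeasurableSpace α] [MeasurableSingletonClass α]
    {μ : Measure α} [IsFiniteMeasure μ] {C : Set α} (hC : C.Finite) (hμ : ∀ᵐ x ∂μ, x ∈ C)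
    (F : α → ℝ) : Integrable F μ := by
  rw [← Measure.restrict_eq_self_of_ae_mem hμ]
  exact IntegrableOn.of_finite hC

lemma measureReal_eq_integral_indicator_of_ae_mem_finite {α : Type*} [MeasurableSpace α]
    [MeasurableSingletonClass α] {μ : Measure α} {C : Set α} (hC : C.Finite)
    (hμ : ∀ᵐ x ∂μ, x ∈ C) (S : Set α) : μ.real S = ∫ x, S.indicator 1 x ∂μ := by
  have hSC : (S ∩ C : Set α) =ᵐ[μ] S :=
    inter_ae_eq_left_of_ae_eq_univ (ae_eq_univ.mpr (ae_iff.mp hμ))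
  rw [← measureReal_congr hSC,
    ← integral_indicator_one (hC.subset Set.inter_subset_right).measurableSet]
  exact integral_congr_ae (indicator_ae_eq_of_ae_eq_set hSC)

lemma measureReal_label_ne_eq {α : Type*} [MeasurableSpace α] [MeasurableSingletonClass α]
    {μ : Measure (α × ℝ)} [IsProbabilityMeasure μ] {C : Set (α × ℝ)} (hC : C.Finite)
    (hμ : ∀ᵐ p ∂μ, p ∈ C) (hY : ∀ᵐ p ∂μ, p.2 = 1 ∨ p.2 = -1) (s : α → ℝ)
    (hs : ∀ x, s x = 1 ∨ s x = -1) :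
    μ.real {p | p.2 ≠ s p.1} = 1 / 2 - 1 / 2 * ∫ p, p.2 * s p.1 ∂μ := by
  have hpt : ∀ᵐ p ∂μ, {p : α × ℝ | p.2 ≠ s p.1}.indicator 1 p = (1 - p.2 * s p.1) / 2 := by
    filter_upwards [hY] with p hp
    rcases hp with hp | hp <;> rcases hs p.1 with hq | hq <;>
      simp [Set.indicator, hp, hq] <;> norm_num
  have hint := integrable_of_ae_mem_finite hC hμ
  rw [measureReal_eq_integral_indicator_of_ae_mem_finite hC hμ, integral_congr_ae hpt,
    integral_div, integral_sub (hint _) (hint _)]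
  simp only [integral_const, probReal_univ, smul_eq_mul, mul_one]
  ring

noncomputable def juntaKernel {d : ℕ} (J : Finset (Fin d)) (x y : Fin d → ℝ) : ℝ :=
  ∑ S ∈ J.powerset, chiChar S x * chiChar S y

section JuntaKernel

variable {d : ℕ} (J : Finset (Fin d))

lemma juntaKernel_eq_prod (x y : Fin d → ℝ) :
    juntaKernel J x y = ∏ j ∈ J, (1 + x j * y j) := by
  simp [prod_one_add, juntaKernel, chiChar, prod_mul_distrib]

lemma sum_juntaKernel_pmOf (x : Fin d → ℝ) :
    ∑ b : Fin d → Bool, juntaKernel J x (pmOf b) = 2 ^ d := by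
  classical
  have hfactor (j : Fin d) :
      ∑ t : Bool, (if j ∈ J then 1 + x j * (if t then 1 else -1) else 1) = (2 : ℝ) := by
    by_cases hj : j ∈ J
    · simp only [hj, ↓reduceIte, Fintype.sum_bool, Bool.false_eq_true]
      ring
    · simp [hj]
  calc ∑ b : Fin d → Bool, juntaKernel J x (pmOf b)
      = ∑ b : Fin d → Bool, ∏ j, (if j ∈ J then 1 + x j * (if b j then 1 else -1) else 1) := by
        simp only [juntaKernel_eq_prod, Fintype.prod_ite_mem, pmOf]
    _ = ∏ j, ∑ t : Bool, (if j ∈ J then 1 + x j * (if t then 1 else -1) else 1) := by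
        rw [Fintype.prod_sum]
    _ = 2 ^ d := by simp only [hfactor, prod_const, card_univ, Fintype.card_fin]

lemma juntaKernel_pmOf_eq_zero {x : Fin d → ℝ} {b : Fin d → Bool} {j : Fin d} (hj : j ∈ J)
    (hx : x j = 1 ∨ x j = -1) (hne : x j ≠ pmOf b j) : juntaKernel J x (pmOf b) = 0 := by
  rw [juntaKernel_eq_prod]
  refine prod_eq_zero hj ?_
  rcases hx with hx | hx <;> cases hb : b j <;> simp_all [pmOf]

lemma sum_mul_juntaKernel_pmOf {g : (Fin d → ℝ) → ℝ} (hg : DependsOn g (J : Set (Fin d)))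
    {x : Fin d → ℝ} (hx : ∀ j ∈ J, x j = 1 ∨ x j = -1) :
    ∑ b : Fin d → Bool, g (pmOf b) * juntaKernel J x (pmOf b) = 2 ^ d * g x := by
  calc ∑ b : Fin d → Bool, g (pmOf b) * juntaKernel J x (pmOf b)
      = ∑ b : Fin d → Bool, g x * juntaKernel J x (pmOf b) := by
        refine sum_congr rfl fun b _ => ?_
        by_cases hagree : ∀ j ∈ J, x j = pmOf b j
        · rw [hg fun j hj => (hagree j hj).symm]
        · push Not at hagree
          obtain ⟨j, hj, hne⟩ := hagree
          rw [juntaKernel_pmOf_eq_zero J hj (hx j hj) hne, mul_zero, mul_zero]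
    _ = 2 ^ d * g x := by rw [← mul_sum, sum_juntaKernel_pmOf, mul_comm]

end JuntaKernel

def cubeSupport (d : ℕ) : Set ((Fin d → ℝ) × ℝ) :=
  {p | (∀ i, p.1 i = 1 ∨ p.1 i = -1) ∧ (p.2 = 1 ∨ p.2 = -1)}

lemma cubeSupport_finite (d : ℕ) : (cubeSupport d).Finite := by
  refine ((Set.Finite.pi' fun _ => Set.toFinite {(1 : ℝ), -1}).prod
    (Set.toFinite {(1 : ℝ), -1})).subset fun p hp => ?_
  simpa [cubeSupport] using hp

section Correlation

variable {d : ℕ} {D : Measure ((Fin d → ℝ) × ℝ)} [IsFiniteMeasure D]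
  (hD : ∀ᵐ p ∂D, p ∈ cubeSupport d) (J : Finset (Fin d))
include hD

lemma fJ_eq_integral_juntaKernel (v : Fin d → ℝ) :
    fJ D J v = 1 / 2 ^ d * ∫ p, p.2 * juntaKernel J p.1 v ∂D := by
  have hint := integrable_of_ae_mem_finite (cubeSupport_finite d) hD
  simp only [fJ, coeffA, juntaKernel, mul_sum, integral_finsetSum _ fun S _ => hint _]
  refine sum_congr rfl fun S _ => ?_
  simp only [← mul_assoc, integral_mul_const]

lemma integral_label_mul_eq_sum_mul_fJ {g : (Fin d → ℝ) → ℝ}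
    (hg : DependsOn g (J : Set (Fin d))) :
    ∫ p, p.2 * g p.1 ∂D = ∑ b : Fin d → Bool, g (pmOf b) * fJ D J (pmOf b) := by
  have hint := integrable_of_ae_mem_finite (cubeSupport_finite d) hD
  have hrepr : ∀ᵐ p ∂D, p.2 * ∑ b : Fin d → Bool, g (pmOf b) * juntaKernel J p.1 (pmOf b)
      = 2 ^ d * (p.2 * g p.1) := by
    filter_upwards [hD] with p hp
    rw [sum_mul_juntaKernel_pmOf J hg fun j _ => hp.1 j]
    ring
  calc ∫ p, p.2 * g p.1 ∂D
      = 1 / 2 ^ d *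
          ∫ p, p.2 * ∑ b : Fin d → Bool, g (pmOf b) * juntaKernel J p.1 (pmOf b) ∂D := by
        rw [integral_congr_ae hrepr, integral_const_mul]
        field_simp
    _ = ∑ b : Fin d → Bool, g (pmOf b) * fJ D J (pmOf b) := by
        simp only [fJ_eq_integral_juntaKernel hD, mul_sum, integral_finsetSum _ fun b _ => hint _]
        refine sum_congr rfl fun b _ => ?_
        simp only [← integral_const_mul]
        congr 1 with p
        ring

end Correlation

lemma signFun_eq_one_or_neg_one (t : ℝ) : signFun t = 1 ∨ signFun t = -1 := by
  unfold signFun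
  split_ifs <;> simp

lemma abs_sub_signFun_mul_le (f t : ℝ) : |f| - signFun t * f ≤ 2 * |f - t| := by
  unfold signFun
  split_ifs <;> cases abs_cases f <;> cases abs_cases (f - t) <;> linarith

lemma sum_abs_sub_sum_signFun_mul_le {ι : Type*} [Fintype ι] (f t : ι → ℝ) :
    ∑ i, |f i| - ∑ i, signFun (t i) * f i
      ≤ 2 * √(Fintype.card ι * ∑ i, (f i - t i) ^ 2) := by
  have hcauchy : ∑ i, |f i - t i| ≤ √(Fintype.card ι * ∑ i, (f i - t i) ^ 2) := by
    have := sq_sum_le_card_mul_sum_sq (s := univ) (f := fun i => |f i - t i|)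
    simp only [sq_abs, card_univ] at this
    exact Real.le_sqrt_of_sq_le this
  calc ∑ i, |f i| - ∑ i, signFun (t i) * f i
      = ∑ i, ( |f i| - signFun (t i) * f i) := by rw [sum_sub_distrib]
    _ ≤ ∑ i, 2 * |f i - t i| := sum_le_sum fun i _ => abs_sub_signFun_mul_le _ _
    _ ≤ 2 * √(Fintype.card ι * ∑ i, (f i - t i) ^ 2) := by rw [← mul_sum]; gcongr

lemma le_Upoly {x : ℝ} (hx : 0 ≤ x) : x ≤ Upoly x := by
  unfold Upoly
  nlinarith

/-- For `(X,Y) ∼ D` on `{-1,1}^d × {-1,1}`, `J ⊆ [d]`, and `h` depending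
only on the coordinates in `J`, the 0-1 loss of `sign ∘ h` is at most
`1/2 - (1/2)·Σ_x |f^J(x)| + U(√(2^d·Σ_x (f^J(x) - h(x))²))`, the sums being over the
Boolean cube, where `U(x) = x³ + (3/2)x² + (3/2)x`. -/
theorem loss_sign_le_fourier_bound
    (d : ℕ) (D : Measure ((Fin d → ℝ) × ℝ)) [IsProbabilityMeasure D]
    (hD : ∀ᵐ p ∂D, (∀ i, p.1 i = 1 ∨ p.1 i = -1) ∧ (p.2 = 1 ∨ p.2 = -1))
    (J : Finset (Fin d)) (h : (Fin d → ℝ) → ℝ)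
    (hhJ : ∀ x x' : Fin d → ℝ, (∀ j ∈ J, x j = x' j) → h x = h x') :
    (D {p | p.2 ≠ signFun (h p.1)}).toReal
      ≤ 1 / 2 - (1 / 2) * (∑ b : Fin d → Bool, |fJ D J (pmOf b)|)
        + Upoly (Real.sqrt
            ((2 : ℝ) ^ d * ∑ b : Fin d → Bool, (fJ D J (pmOf b) - h (pmOf b)) ^ 2)) := by
  have hsign : DependsOn (fun x => signFun (h x)) (J : Set (Fin d)) :=
    fun x y hxy => congrArg signFun (hhJ x y hxy)
  have hloss := measureReal_label_ne_eq (cubeSupport_finite d) hD (hD.mono fun p hp => hp.2)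
    (fun x => signFun (h x)) fun x => signFun_eq_one_or_neg_one _
  rw [integral_label_mul_eq_sum_mul_fJ hD J hsign] at hloss
  have herr := sum_abs_sub_sum_signFun_mul_le (fun b => fJ D J (pmOf b)) (fun b => h (pmOf b))
  simp only [Fintype.card_fun, Fintype.card_bool, Fintype.card_fin, Nat.cast_pow,
    Nat.cast_ofNat] at herr
  have hU := le_Upoly (Real.sqrt_nonneg ((2 : ℝ) ^ d * ∑ b : Fin d → Bool,
    (fJ D J (pmOf b) - h (pmOf b)) ^ 2))
  rw [← measureReal_def, hloss]
  linarith
end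

section
/- Let (X,Y) be a pair of random variables where Y takes values in {-1,1}, let p be a real-valued measurable square-integrable function of X, and let θ be a real random variable independent of (X,Y) with probability density f_θ(t) = 1 − |t| on [−1,1] (and 0 elsewhere). Then P{Y ≠ sign(p(X) − θ)} ≤ (1/2)·E[(Y − p(X))²], where the probability on the left is over both (X,Y) and θ. -/
/-!
By independence, conditionally on `(X, Y)` the rounding errs exactly when `θ` falls in a
half-line: `θ > p(X)` if `Y = 1` and `θ ≤ p(X)` if `Y = -1`. The triangular density gives
`P(θ ≥ q) ≤ (1 - q)² / 2` for every real `q` (with equality on `[-1, 1]`), and by its symmetry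
`P(θ ≤ q) ≤ (1 + q)² / 2`; in both cases the conditional error is at most `(Y - p(X))² / 2`.
Integrating over `(X, Y)` gives the claim.
-/

open MeasureTheory ProbabilityTheory

open Set

theorem ProbabilityTheory.IndepFun.measure_prodMk_mem_eq_lintegral {Ω α β : Type*}
    [MeasurableSpace Ω] [MeasurableSpace α] [MeasurableSpace β]
    {μ : Measure Ω} [IsFiniteMeasure μ] {U : Ω → α} {V : Ω → β}
    (hU : Measurable U) (hV : Measurable V) (h : IndepFun U V μ)
    {B : Set (α × β)} (hB : MeasurableSet B) :
    μ {ω | (U ω, V ω) ∈ B} = ∫⁻ ω, μ.map V (Prod.mk (U ω) ⁻¹' B) ∂μ := by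
  have hmap := (indepFun_iff_map_prod_eq_prod_map_map hU.aemeasurable hV.aemeasurable).mp h
  rw [← lintegral_map (measurable_measure_prodMk_left hB) hU, ← Measure.prod_apply hB, ← hmap,
    Measure.map_apply (hU.prodMk hV) hB]
  rfl

theorem setLIntegral_Ici_ofReal_sub_le (a q : ℝ) :
    ∫⁻ t in Ici q, ENNReal.ofReal (a - t) ≤ ENNReal.ofReal ((a - q) ^ 2 / 2) := by
  rcases le_or_gt a q with haq | hqa
  · rw [setLIntegral_congr_fun measurableSet_Ici (g := 0)
      (fun t (ht : q ≤ t) => ENNReal.ofReal_of_nonpos (by linarith))]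
    simp
  have hsplit : Ici q = Icc q a ∪ Ioi a := (Icc_union_Ioi_eq_Ici hqa.le).symm
  have hvanish : ∫⁻ t in Ioi a, ENNReal.ofReal (a - t) = 0 := by
    rw [setLIntegral_congr_fun measurableSet_Ioi (g := 0)
      (fun t (ht : a < t) => ENNReal.ofReal_of_nonpos (by linarith))]
    simp
  have hIcc : ∫⁻ t in Icc q a, ENNReal.ofReal (a - t) = ENNReal.ofReal ((a - q) ^ 2 / 2) := by
    rw [← ofReal_integral_eq_lintegral_ofReal
      (by fun_prop : Continuous fun t : ℝ => a - t).integrableOn_Icc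
      ((ae_restrict_iff' measurableSet_Icc).mpr (ae_of_all _ fun t ht => sub_nonneg.mpr ht.2)),
      integral_Icc_eq_integral_Ioc, ← intervalIntegral.integral_of_le hqa.le,
      intervalIntegral.integral_sub intervalIntegrable_const intervalIntegral.intervalIntegrable_id,
      intervalIntegral.integral_const, integral_id, smul_eq_mul]
    ring_nf
  calc ∫⁻ t in Ici q, ENNReal.ofReal (a - t)
      ≤ (∫⁻ t in Icc q a, ENNReal.ofReal (a - t))
          + ∫⁻ t in Ioi a, ENNReal.ofReal (a - t) := by
        rw [hsplit]; exact lintegral_union_le _ _ _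
    _ = ENNReal.ofReal ((a - q) ^ 2 / 2) := by rw [hIcc, hvanish, add_zero]

noncomputable def triangularMeasure : Measure ℝ :=
  volume.withDensity fun t => ENNReal.ofReal (1 - |t|)

theorem triangularMeasure_Ici_le (q : ℝ) :
    triangularMeasure (Ici q) ≤ ENNReal.ofReal ((1 - q) ^ 2 / 2) := by
  rw [triangularMeasure, withDensity_apply _ measurableSet_Ici]
  calc ∫⁻ t in Ici q, ENNReal.ofReal (1 - |t|)
      ≤ ∫⁻ t in Ici q, ENNReal.ofReal (1 - t) :=
        lintegral_mono fun t => ENNReal.ofReal_le_ofReal (by linarith [le_abs_self t])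
    _ ≤ _ := setLIntegral_Ici_ofReal_sub_le 1 q

theorem triangularMeasure_Iic (q : ℝ) :
    triangularMeasure (Iic q) = triangularMeasure (Ici (-q)) := by
  rw [triangularMeasure, withDensity_apply _ measurableSet_Iic,
    withDensity_apply _ measurableSet_Ici,
    ← lintegral_indicator measurableSet_Iic, ← lintegral_indicator measurableSet_Ici,
    ← lintegral_neg_eq_self]
  congr 1
  ext t
  simp [indicator, neg_le]

theorem measurable_signFun : Measurable signFun :=
  Measurable.ite measurableSet_Ici measurable_const measurable_const

theorem setOf_one_ne_signFun_sub (q : ℝ) : {t | (1 : ℝ) ≠ signFun (q - t)} = Ioi q := by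
  ext t
  norm_num [signFun]

theorem setOf_neg_one_ne_signFun_sub (q : ℝ) : {t | (-1 : ℝ) ≠ signFun (q - t)} = Iic q := by
  ext t
  norm_num [signFun]

theorem triangularMeasure_ne_signFun_sub_le {y : ℝ} (hy : y = 1 ∨ y = -1) (q : ℝ) :
    triangularMeasure {t | y ≠ signFun (q - t)} ≤ ENNReal.ofReal ((y - q) ^ 2 / 2) := by
  rcases hy with rfl | rfl
  · rw [setOf_one_ne_signFun_sub]
    exact (measure_mono Ioi_subset_Ici_self).trans (triangularMeasure_Ici_le q)
  · rw [setOf_neg_one_ne_signFun_sub, triangularMeasure_Iic]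
    convert triangularMeasure_Ici_le (-q) using 3
    ring

/-- Let `Y` be `{-1,1}`-valued, `p` a square-integrable function of `X`,
and `θ` a random threshold independent of `(X,Y)` with density `f_θ(t) = 1 - |t|` on
`[-1,1]`. Then `P{Y ≠ sign(p(X) - θ)} ≤ (1/2)·E[(Y - p(X))²]`. -/
theorem randomized_rounding_loss_le_half_square_loss
    {Ω 𝓧 : Type*} [MeasurableSpace Ω] [MeasurableSpace 𝓧]
    (μ : Measure Ω) [IsProbabilityMeasure μ]
    (X : Ω → 𝓧) (Y : Ω → ℝ) (θ : Ω → ℝ) (p : 𝓧 → ℝ)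
    (hX : Measurable X) (hY : Measurable Y) (hθ : Measurable θ)
    (hYpm : ∀ ω, Y ω = 1 ∨ Y ω = -1)
    (hp : Measurable p) (hp2 : MemLp (fun ω => p (X ω)) 2 μ)
    (hindep : IndepFun (fun ω => (X ω, Y ω)) θ μ)
    (hlaw : Measure.map θ μ
      = (volume : Measure ℝ).withDensity fun t => ENNReal.ofReal (1 - |t|)) :
    (μ {ω | Y ω ≠ signFun (p (X ω) - θ ω)}).toReal
      ≤ (1 / 2) * ∫ ω, (Y ω - p (X ω)) ^ 2 ∂μ := by
  have hB : MeasurableSet {z : (𝓧 × ℝ) × ℝ | z.1.2 ≠ signFun (p z.1.1 - z.2)} :=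
    (measurableSet_eq_fun (by fun_prop)
      (measurable_signFun.comp (by fun_prop))).compl
  have hY2 : MemLp Y 2 μ :=
    MemLp.of_bound hY.aestronglyMeasurable 1
      (ae_of_all _ fun ω => by rcases hYpm ω with h | h <;> simp [h])
  have hloss : Integrable (fun ω => (Y ω - p (X ω)) ^ 2 / 2) μ :=
    (hY2.sub hp2).integrable_sq.div_const 2
  refine ENNReal.toReal_le_of_le_ofReal (by positivity) ?_
  calc μ {ω | Y ω ≠ signFun (p (X ω) - θ ω)}
      = ∫⁻ ω, triangularMeasure {t | Y ω ≠ signFun (p (X ω) - t)} ∂μ := by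
        rw [triangularMeasure, ← hlaw]
        exact hindep.measure_prodMk_mem_eq_lintegral (hX.prodMk hY) hθ hB
    _ ≤ ∫⁻ ω, ENNReal.ofReal ((Y ω - p (X ω)) ^ 2 / 2) ∂μ :=
        lintegral_mono fun ω => triangularMeasure_ne_signFun_sub_le (hYpm ω) _
    _ = ENNReal.ofReal ((1 / 2) * ∫ ω, (Y ω - p (X ω)) ^ 2 ∂μ) := by
        rw [← ofReal_integral_eq_lintegral_ofReal hloss (ae_of_all _ fun ω => by positivity),
          integral_div]
        ring_nf
end
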